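/- For 0 < α < 1, m > 1 and β ≥ β₀, and any continuous Y : [0,∞) → [0,1] with Y(0)=1, there exists η* with η₂(β) ≤ η* ≤ η₁(β) and S_β(Y)(η*) = 0. -/

import Mathlib

open Real

/-- The Erdélyi–Kober operator I^{0,1-α}_{-2/α}. -/
noncomputable def EK (α : ℝ) (W : ℝ → ℝ) (η : ℝ) : ℝ :=
  (1 / Real.Gamma (1 - α)) * ∫ s in (0:ℝ)..1, (1 - s) ^ (-α) * W (s ^ (-(α / 2)) * η)

/-- The operator S_β. -/
noncomputable def Sop (α m β : ℝ) (Y : ℝ → ℝ) (η : ℝ) : ℝ :=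
  1 + (m + 1) * (-(β * η) +
    ∫ z in (0:ℝ)..η, ((1 - α / 2) * η - z) * EK α (fun t => Y t ^ (1 / (1 + m))) z)

/-- The root η₁(β). -/
noncomputable def eta1 (α m β : ℝ) : ℝ :=
  4 * β * Real.Gamma (2 - α) / (2 - α) ^ 2 -
    2 * Real.sqrt 2 / ((2 - α) ^ 2 * Real.sqrt (m + 1)) *
      Real.sqrt (2 * β ^ 2 * (m + 1) * Real.Gamma (2 - α) ^ 2 - (2 - α) * Real.Gamma (3 - α))

/-- The root η₂(β). -/
noncomputable def eta2 (α m β : ℝ) : ℝ :=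
  2 * Real.sqrt 2 *
      Real.sqrt (Real.Gamma (2 - α) * (α ^ 2 + 2 * β ^ 2 * (m + 1) * Real.Gamma (2 - α))) /
    (α ^ 2 * Real.sqrt (m + 1)) - 4 * β * Real.Gamma (2 - α) / α ^ 2

/-!
Since `Y ^ (1 / (1 + m))` takes values in `[0, 1]` and the kernel `(1 - s) ^ (-α)` integrates to
`1 / (1 - α)`, the Erdélyi–Kober term `E` lies in `[0, 1 / Γ(2 - α)]`. The weight
`(1 - α / 2) η - z` changes sign at `z = (1 - α / 2) η`; bounding `E` from above on one side and
from below on the other squeezes `S_β(Y)(η)`, for `η ≥ 0`, between two quadratics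
`g₂ ≤ S_β(Y) ≤ g₁`. `η₁(β)` is the smaller root of `g₁`, real exactly when `β ≥ β₀`, and `η₂(β)`
is the positive root of `g₂`. Hence `S_β(Y)(η₁) ≤ 0 ≤ S_β(Y)(η₂)`, `η₂ ≤ η₁`, and the
intermediate value theorem applies to the continuous function `S_β(Y)`.
-/

open MeasureTheory Set intervalIntegral

section ErdelyiKober

variable {α : ℝ} {W : ℝ → ℝ}

lemma intervalIntegrable_one_sub_rpow_neg (hα1 : α < 1) :
    IntervalIntegrable (fun s : ℝ => (1 - s) ^ (-α)) volume 0 1 := by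
  have h : IntervalIntegrable (fun s : ℝ => s ^ (-α)) volume 0 1 :=
    intervalIntegrable_rpow' (by linarith)
  simpa using (h.comp_sub_left 1).symm

lemma integral_one_sub_rpow_neg (hα1 : α < 1) :
    ∫ s in (0:ℝ)..1, (1 - s) ^ (-α) = (1 - α)⁻¹ := by
  rw [integral_comp_sub_left (fun s : ℝ => s ^ (-α)), sub_self, sub_zero,
    integral_rpow (Or.inl (by linarith)), zero_rpow (by linarith), one_rpow]
  ring

lemma Gamma_two_sub (hα : α ≠ 1) : Gamma (2 - α) = (1 - α) * Gamma (1 - α) := by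
  rw [show 2 - α = (1 - α) + 1 by ring, Gamma_add_one (sub_ne_zero.2 hα.symm)]

lemma norm_EK_integrand_le (hW0 : ∀ t, 0 ≤ W t) (hW1 : ∀ t, W t ≤ 1) (η : ℝ) {s : ℝ}
    (hs : s ≤ 1) : ‖(1 - s) ^ (-α) * W (s ^ (-(α / 2)) * η)‖ ≤ (1 - s) ^ (-α) := by
  have hk : 0 ≤ (1 - s) ^ (-α) := rpow_nonneg (by linarith) _
  rw [norm_mul, norm_of_nonneg hk, norm_of_nonneg (hW0 _)]
  exact mul_le_of_le_one_right hk (hW1 _)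

lemma intervalIntegrable_EK_integrand (hα1 : α < 1) (hW : Continuous W)
    (hW0 : ∀ t, 0 ≤ W t) (hW1 : ∀ t, W t ≤ 1) (η : ℝ) :
    IntervalIntegrable (fun s => (1 - s) ^ (-α) * W (s ^ (-(α / 2)) * η)) volume 0 1 := by
  refine (intervalIntegrable_one_sub_rpow_neg hα1).mono_fun'
    (Measurable.aestronglyMeasurable (by fun_prop)) ?_
  rw [uIoc_of_le zero_le_one]
  filter_upwards [ae_restrict_mem measurableSet_Ioc] with s hs
  exact norm_EK_integrand_le hW0 hW1 η hs.2

lemma continuous_EK (hα1 : α < 1) (hW : Continuous W) (hW0 : ∀ t, 0 ≤ W t)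
    (hW1 : ∀ t, W t ≤ 1) : Continuous (EK α W) := by
  refine continuous_const.mul
    (continuous_of_dominated_interval
      (fun η => Measurable.aestronglyMeasurable (by fun_prop)) (fun η => ?_)
      (intervalIntegrable_one_sub_rpow_neg hα1) (.of_forall fun s _ => by fun_prop))
  rw [uIoc_of_le zero_le_one]
  exact .of_forall fun s hs => norm_EK_integrand_le hW0 hW1 η hs.2

lemma EK_nonneg (hα1 : α < 1) (hW0 : ∀ t, 0 ≤ W t) (η : ℝ) : 0 ≤ EK α W η :=
  mul_nonneg (one_div_nonneg.2 (Gamma_pos_of_pos (by linarith)).le)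
    (integral_nonneg zero_le_one fun s hs =>
      mul_nonneg (rpow_nonneg (by linarith [hs.2]) _) (hW0 _))

lemma EK_le_inv_Gamma (hα1 : α < 1) (hW : Continuous W) (hW0 : ∀ t, 0 ≤ W t)
    (hW1 : ∀ t, W t ≤ 1) (η : ℝ) : EK α W η ≤ (Gamma (2 - α))⁻¹ := by
  have hΓ : 0 < Gamma (1 - α) := Gamma_pos_of_pos (by linarith)
  have hint :
      ∫ s in (0:ℝ)..1, (1 - s) ^ (-α) * W (s ^ (-(α / 2)) * η) ≤ (1 - α)⁻¹ := by
    rw [← integral_one_sub_rpow_neg hα1]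
    exact integral_mono_on zero_le_one (intervalIntegrable_EK_integrand hα1 hW hW0 hW1 η)
      (intervalIntegrable_one_sub_rpow_neg hα1) fun s hs =>
        (le_abs_self _).trans (norm_EK_integrand_le hW0 hW1 η hs.2)
  calc EK α W η ≤ (1 / Gamma (1 - α)) * (1 - α)⁻¹ :=
        mul_le_mul_of_nonneg_left hint (by positivity)
    _ = (Gamma (2 - α))⁻¹ := by rw [Gamma_two_sub hα1.ne]; field_simp

end ErdelyiKober

section WeightedIntegral

variable {E : ℝ → ℝ} {K c η : ℝ}

lemma integral_sub_mul_le (hE : Continuous E) (hE0 : ∀ z, 0 ≤ E z) (hEK : ∀ z, E z ≤ K)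
    (hc0 : 0 ≤ c) (hcη : c ≤ η) : ∫ z in (0:ℝ)..η, (c - z) * E z ≤ K * c ^ 2 / 2 := by
  have hi : ∀ a b, IntervalIntegrable (fun z => (c - z) * E z) volume a b :=
    fun a b => by apply Continuous.intervalIntegrable; fun_prop
  have hleft : ∫ z in (0:ℝ)..c, (c - z) * E z ≤ ∫ z in (0:ℝ)..c, (c - z) * K :=
    integral_mono_on hc0 (hi 0 c) (by apply Continuous.intervalIntegrable; fun_prop)
      fun z hz => mul_le_mul_of_nonneg_left (hEK z) (by linarith [hz.2])
  have hright : ∫ z in c..η, (c - z) * E z ≤ 0 := by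
    simpa using integral_mono_on hcη (hi c η) (intervalIntegrable_const (c := 0))
      (fun z hz => mul_nonpos_of_nonpos_of_nonneg (by linarith [hz.1]) (hE0 z))
  have hK : ∫ z in (0:ℝ)..c, (c - z) * K = K * c ^ 2 / 2 := by
    rw [intervalIntegral.integral_mul_const, integral_comp_sub_left (fun z => z), integral_id]
    ring
  rw [← integral_add_adjacent_intervals (hi 0 c) (hi c η)]
  linarith

lemma neg_le_integral_sub_mul (hE : Continuous E) (hE0 : ∀ z, 0 ≤ E z) (hEK : ∀ z, E z ≤ K)
    (hc0 : 0 ≤ c) (hcη : c ≤ η) :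
    -(K * (η - c) ^ 2 / 2) ≤ ∫ z in (0:ℝ)..η, (c - z) * E z := by
  have hi : ∀ a b, IntervalIntegrable (fun z => (c - z) * E z) volume a b :=
    fun a b => by apply Continuous.intervalIntegrable; fun_prop
  have hleft : 0 ≤ ∫ z in (0:ℝ)..c, (c - z) * E z :=
    integral_nonneg hc0 fun z hz => mul_nonneg (by linarith [hz.2]) (hE0 z)
  have hright : ∫ z in c..η, (c - z) * K ≤ ∫ z in c..η, (c - z) * E z :=
    integral_mono_on hcη (by apply Continuous.intervalIntegrable; fun_prop) (hi c η)
      fun z hz => mul_le_mul_of_nonpos_left (hEK z) (by linarith [hz.1])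
  have hK : ∫ z in c..η, (c - z) * K = -(K * (η - c) ^ 2 / 2) := by
    rw [intervalIntegral.integral_mul_const, integral_comp_sub_left (fun z => z), integral_id]
    ring
  rw [← integral_add_adjacent_intervals (hi 0 c) (hi c η)]
  linarith

end WeightedIntegral

section Sandwich

variable {α m β : ℝ} {Y : ℝ → ℝ}

-- The paper's `g₁` and `g₂`: the integral in `Sop` estimated with `0 ≤ EK ≤ 1 / Γ(2 - α)`.
noncomputable def SopMajorant (α m β η : ℝ) : ℝ :=
  1 + (m + 1) * (-(β * η) + (2 - α) ^ 2 * η ^ 2 / (8 * Gamma (2 - α)))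

noncomputable def SopMinorant (α m β η : ℝ) : ℝ :=
  1 + (m + 1) * (-(β * η) - α ^ 2 * η ^ 2 / (8 * Gamma (2 - α)))

lemma EK_rpow_bounds (hα1 : α < 1) (hm : -1 < m) (hY : Continuous Y) (hY0 : ∀ t, 0 ≤ Y t)
    (hY1 : ∀ t, Y t ≤ 1) :
    Continuous (EK α fun t => Y t ^ (1 / (1 + m))) ∧
      (∀ z, 0 ≤ EK α (fun t => Y t ^ (1 / (1 + m))) z) ∧
      ∀ z, EK α (fun t => Y t ^ (1 / (1 + m))) z ≤ (Gamma (2 - α))⁻¹ := by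
  have hp : 0 ≤ 1 / (1 + m) := one_div_nonneg.2 (by linarith)
  have hW : Continuous fun t => Y t ^ (1 / (1 + m)) := hY.rpow_const fun _ => Or.inr hp
  have hW0 : ∀ t, 0 ≤ Y t ^ (1 / (1 + m)) := fun t => rpow_nonneg (hY0 t) _
  have hW1 : ∀ t, Y t ^ (1 / (1 + m)) ≤ 1 := fun t => rpow_le_one (hY0 t) (hY1 t) hp
  exact ⟨continuous_EK hα1 hW hW0 hW1, EK_nonneg hα1 hW0, EK_le_inv_Gamma hα1 hW hW0 hW1⟩

lemma continuous_Sop (hα1 : α < 1) (hm : -1 < m) (hY : Continuous Y) (hY0 : ∀ t, 0 ≤ Y t)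
    (hY1 : ∀ t, Y t ≤ 1) : Continuous (Sop α m β Y) := by
  have hE := (EK_rpow_bounds hα1 hm hY hY0 hY1).1
  unfold Sop
  fun_prop

lemma Sop_mem_Icc (hα0 : 0 ≤ α) (hα1 : α < 1) (hm : -1 < m) (hY : Continuous Y)
    (hY0 : ∀ t, 0 ≤ Y t) (hY1 : ∀ t, Y t ≤ 1) {η : ℝ} (hη : 0 ≤ η) :
    Sop α m β Y η ∈ Icc (SopMinorant α m β η) (SopMajorant α m β η) := by
  obtain ⟨hE, hE0, hE1⟩ := EK_rpow_bounds hα1 hm hY hY0 hY1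
  have hc0 : 0 ≤ (1 - α / 2) * η := mul_nonneg (by linarith) hη
  have hcη : (1 - α / 2) * η ≤ η := by nlinarith
  have hm1 : 0 ≤ m + 1 := by linarith
  have hup := integral_sub_mul_le hE hE0 hE1 hc0 hcη
  have hlo := neg_le_integral_sub_mul hE hE0 hE1 hc0 hcη
  have hG : Gamma (2 - α) ≠ 0 := (Gamma_pos_of_pos (by linarith)).ne'
  rw [show (Gamma (2 - α))⁻¹ * ((1 - α / 2) * η) ^ 2 / 2
      = (2 - α) ^ 2 * η ^ 2 / (8 * Gamma (2 - α)) by field_simp; ring] at hup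
  rw [show -((Gamma (2 - α))⁻¹ * (η - (1 - α / 2) * η) ^ 2 / 2)
      = -(α ^ 2 * η ^ 2 / (8 * Gamma (2 - α))) by field_simp; ring] at hlo
  unfold Sop SopMinorant SopMajorant
  constructor
  · nlinarith
  · gcongr

end Sandwich

section Roots

variable {α m β : ℝ}

lemma quadratic_eq_zero_of_two_mul_eq_sub {a b c s x : ℝ} (ha : a ≠ 0)
    (hs : s ^ 2 = b ^ 2 - 4 * a * c) (hx : 2 * a * x = b - s) : a * x ^ 2 - b * x + c = 0 := by
  have h : 4 * a * (a * x ^ 2 - b * x + c) = 0 := by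
    linear_combination (2 * a * x - b - s) * hx + hs
  simpa [ha] using h

-- `β ≥ β₀` is exactly the condition for `SopMajorant` to have real roots.
noncomputable def beta0 (α m : ℝ) : ℝ := (2 - α) / √(2 * Gamma (2 - α) * (m + 1))

lemma beta0_pos (hα2 : α < 2) (hm : -1 < m) : 0 < beta0 α m :=
  div_pos (by linarith)
    (sqrt_pos.2 (mul_pos (mul_pos two_pos (Gamma_pos_of_pos (by linarith))) (by linarith)))

lemma sq_two_sub_le_of_beta0_le (hα2 : α < 2) (hm : -1 < m) (hβ : beta0 α m ≤ β) :
    (2 - α) ^ 2 ≤ 2 * Gamma (2 - α) * (m + 1) * β ^ 2 := by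
  have hX : 0 < 2 * Gamma (2 - α) * (m + 1) :=
    mul_pos (mul_pos two_pos (Gamma_pos_of_pos (by linarith))) (by linarith)
  have h := pow_le_pow_left₀ (beta0_pos hα2 hm).le hβ 2
  rwa [beta0, div_pow, sq_sqrt hX.le, div_le_iff₀ hX, mul_comm] at h

lemma two_mul_mul_eta1 (hα2 : α < 2) (hm : -1 < m) :
    2 * ((m + 1) * (2 - α) ^ 2) * eta1 α m β = 8 * Gamma (2 - α) * (m + 1) * β -
      4 * √2 * √(m + 1) *
        √(2 * β ^ 2 * (m + 1) * Gamma (2 - α) ^ 2 - (2 - α) * Gamma (3 - α)) := by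
  have h2α : 2 - α ≠ 0 := by linarith
  have ht : √(m + 1) ^ 2 = m + 1 := sq_sqrt (by linarith)
  have ht0 : √(m + 1) ≠ 0 := (sqrt_pos.2 (by linarith)).ne'
  unfold eta1
  field_simp
  linear_combination (norm := ring_nf) 4 * √2 *
    √(2 * β ^ 2 * (m + 1) * Gamma (2 - α) ^ 2 - (2 - α) * Gamma (3 - α)) * ht

lemma two_mul_mul_eta2 (hα : α ≠ 0) (hm : -1 < m) :
    2 * ((m + 1) * α ^ 2) * eta2 α m β = -(8 * Gamma (2 - α) * (m + 1) * β) -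
      -(4 * √2 * √(m + 1) *
        √(Gamma (2 - α) * (α ^ 2 + 2 * β ^ 2 * (m + 1) * Gamma (2 - α)))) := by
  have ht : √(m + 1) ^ 2 = m + 1 := sq_sqrt (by linarith)
  have ht0 : √(m + 1) ≠ 0 := (sqrt_pos.2 (by linarith)).ne'
  unfold eta2
  field_simp
  linear_combination (norm := ring_nf) -4 * √2 *
    √(Gamma (2 - α) * (α ^ 2 + 2 * β ^ 2 * (m + 1) * Gamma (2 - α))) * ht

lemma eta1_discriminant (hα2 : α < 2) (hm : -1 < m) (hβ : beta0 α m ≤ β) :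
    (4 * √2 * √(m + 1) *
        √(2 * β ^ 2 * (m + 1) * Gamma (2 - α) ^ 2 - (2 - α) * Gamma (3 - α))) ^ 2 =
      (8 * Gamma (2 - α) * (m + 1) * β) ^ 2 -
        4 * ((m + 1) * (2 - α) ^ 2) * (8 * Gamma (2 - α)) := by
  have hΓ3 : Gamma (3 - α) = (2 - α) * Gamma (2 - α) := by
    rw [show 3 - α = (2 - α) + 1 by ring, Gamma_add_one (by linarith)]
  have hD : 0 ≤ 2 * β ^ 2 * (m + 1) * Gamma (2 - α) ^ 2 - (2 - α) * Gamma (3 - α) := by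
    rw [hΓ3]
    nlinarith [sq_two_sub_le_of_beta0_le hα2 hm hβ, Gamma_pos_of_pos (by linarith : 0 < 2 - α)]
  rw [mul_pow, mul_pow, mul_pow, sq_sqrt zero_le_two, sq_sqrt (by linarith), sq_sqrt hD, hΓ3]
  ring

lemma eta2_discriminant (hα2 : α < 2) (hm : -1 < m) :
    (-(4 * √2 * √(m + 1) *
        √(Gamma (2 - α) * (α ^ 2 + 2 * β ^ 2 * (m + 1) * Gamma (2 - α))))) ^ 2 =
      (-(8 * Gamma (2 - α) * (m + 1) * β)) ^ 2 -
        4 * ((m + 1) * α ^ 2) * -(8 * Gamma (2 - α)) := by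
  have hG := Gamma_pos_of_pos (by linarith : 0 < 2 - α)
  have hm1 : 0 ≤ m + 1 := by linarith
  rw [neg_sq, mul_pow, mul_pow, mul_pow, sq_sqrt zero_le_two, sq_sqrt hm1, sq_sqrt (by positivity)]
  ring

lemma SopMajorant_eta1 (hα2 : α < 2) (hm : -1 < m) (hβ : beta0 α m ≤ β) :
    SopMajorant α m β (eta1 α m β) = 0 := by
  have hG := Gamma_pos_of_pos (by linarith : 0 < 2 - α)
  have hroot := quadratic_eq_zero_of_two_mul_eq_sub (c := 8 * Gamma (2 - α))
    (mul_pos (by linarith : 0 < m + 1) (by nlinarith : 0 < (2 - α) ^ 2)).ne'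
    (eta1_discriminant hα2 hm hβ) (two_mul_mul_eta1 hα2 hm)
  unfold SopMajorant
  field_simp
  linear_combination hroot

lemma SopMinorant_eta2 (hα : α ≠ 0) (hα2 : α < 2) (hm : -1 < m) :
    SopMinorant α m β (eta2 α m β) = 0 := by
  have hG := Gamma_pos_of_pos (by linarith : 0 < 2 - α)
  have hroot := quadratic_eq_zero_of_two_mul_eq_sub (c := -(8 * Gamma (2 - α)))
    (mul_pos (by linarith : 0 < m + 1) (by positivity : 0 < α ^ 2)).ne'
    (eta2_discriminant (β := β) hα2 hm) (two_mul_mul_eta2 hα hm)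
  unfold SopMinorant
  field_simp
  linear_combination -hroot

lemma eta1_nonneg (hα2 : α < 2) (hm : -1 < m) (hβ : beta0 α m ≤ β) : 0 ≤ eta1 α m β := by
  have hG := Gamma_pos_of_pos (by linarith : 0 < 2 - α)
  have hm1 : 0 < m + 1 := by linarith
  have hβ0 : 0 < β := (beta0_pos hα2 hm).trans_le hβ
  have hsq := eta1_discriminant hα2 hm hβ
  set s := 4 * √2 * √(m + 1) *
    √(2 * β ^ 2 * (m + 1) * Gamma (2 - α) ^ 2 - (2 - α) * Gamma (3 - α))
  set b := 8 * Gamma (2 - α) * (m + 1) * β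
  have hsb : s ≤ b := (abs_le_of_sq_le_sq' (by rw [hsq]; nlinarith [mul_pos hm1 hG])
    (by positivity)).2
  have h2a : 0 < 2 * ((m + 1) * (2 - α) ^ 2) :=
    mul_pos two_pos (mul_pos hm1 (pow_pos (by linarith) 2))
  exact (mul_nonneg_iff_of_pos_left h2a).1 (two_mul_mul_eta1 hα2 hm ▸ sub_nonneg.2 hsb)

lemma eta2_nonneg (hα : α ≠ 0) (hα2 : α < 2) (hm : -1 < m) : 0 ≤ eta2 α m β := by
  have hG := Gamma_pos_of_pos (by linarith : 0 < 2 - α)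
  have hm1 : 0 < m + 1 := by linarith
  have hsq := eta2_discriminant (β := β) hα2 hm
  set s := 4 * √2 * √(m + 1) *
    √(Gamma (2 - α) * (α ^ 2 + 2 * β ^ 2 * (m + 1) * Gamma (2 - α)))
  set b := 8 * Gamma (2 - α) * (m + 1) * β
  rw [neg_sq, neg_sq] at hsq
  have hbs : b ≤ s := (abs_le_of_sq_le_sq'
    (by rw [hsq]; nlinarith [mul_pos hm1 hG, sq_pos_of_ne_zero hα]) (by positivity)).2
  have h2a : 0 < 2 * ((m + 1) * α ^ 2) := by positivity
  exact (mul_nonneg_iff_of_pos_left h2a).1 (two_mul_mul_eta2 hα hm ▸ by linarith)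

lemma le_of_SopMinorant_eq_zero_of_SopMajorant_eq_zero (hα2 : α < 2) (hm : -1 < m) (hβ : 0 < β)
    {x y : ℝ} (hx : SopMajorant α m β x = 0) (hy : SopMinorant α m β y = 0) : y ≤ x := by
  have hG := Gamma_pos_of_pos (by linarith : 0 < 2 - α)
  have hm1 : 0 < m + 1 := by linarith
  unfold SopMajorant at hx
  unfold SopMinorant at hy
  have hx' : 0 ≤ (m + 1) * ((2 - α) ^ 2 * x ^ 2 / (8 * Gamma (2 - α))) := by positivity
  have hy' : 0 ≤ (m + 1) * (α ^ 2 * y ^ 2 / (8 * Gamma (2 - α))) := by positivity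
  exact le_of_mul_le_mul_left (by nlinarith) (mul_pos hm1 hβ)

end Roots

theorem Sop_has_zero_general (α m β : ℝ) (hα : 0 < α) (hα1 : α < 1) (hm : 1 < m)
    (hβ : β ≥ (2 - α) / Real.sqrt (2 * Real.Gamma (2 - α) * (m + 1)))
    (Y : ℝ → ℝ) (hY : Continuous Y) (hY0 : ∀ t, 0 ≤ Y t) (hY1 : ∀ t, Y t ≤ 1) :
    ∃ ηs, eta2 α m β ≤ ηs ∧ ηs ≤ eta1 α m β ∧ Sop α m β Y ηs = 0 := by
  have hα2 : α < 2 := by linarith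
  have hm' : -1 < m := by linarith
  have hβ' : beta0 α m ≤ β := hβ
  have hS₁ : Sop α m β Y (eta1 α m β) ≤ 0 :=
    (Sop_mem_Icc hα.le hα1 hm' hY hY0 hY1 (eta1_nonneg hα2 hm' hβ')).2.trans
      (SopMajorant_eta1 hα2 hm' hβ').le
  have hS₂ : 0 ≤ Sop α m β Y (eta2 α m β) :=
    (SopMinorant_eta2 hα.ne' hα2 hm').ge.trans
      (Sop_mem_Icc hα.le hα1 hm' hY hY0 hY1 (eta2_nonneg hα.ne' hα2 hm')).1
  have hle : eta2 α m β ≤ eta1 α m β :=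
    le_of_SopMinorant_eq_zero_of_SopMajorant_eq_zero hα2 hm' ((beta0_pos hα2 hm').trans_le hβ')
      (SopMajorant_eta1 hα2 hm' hβ') (SopMinorant_eta2 hα.ne' hα2 hm')
  obtain ⟨ηs, ⟨hη₂, hη₁⟩, hzero⟩ :=
    intermediate_value_Icc' hle (continuous_Sop hα1 hm' hY hY0 hY1).continuousOn ⟨hS₁, hS₂⟩
  exact ⟨ηs, hη₂, hη₁, hzero⟩

/-- For β ≥ β₀ there exists η* ∈ [η₂(β), η₁(β)] with S_β(Y)(η*) = 0. -/
theorem Sop_has_zero (α m β : ℝ) (hα : 0 < α) (hα1 : α < 1) (hm : 1 < m)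
    (hβ : β ≥ (2 - α) / Real.sqrt (2 * Real.Gamma (2 - α) * (m + 1)))
    (Y : ℝ → ℝ) (hY : Continuous Y) (hY0 : ∀ t, 0 ≤ Y t) (hY1 : ∀ t, Y t ≤ 1)
    (hYinit : Y 0 = 1) :
    ∃ ηs, eta2 α m β ≤ ηs ∧ ηs ≤ eta1 α m β ∧ Sop α m β Y ηs = 0 :=
  Sop_has_zero_general α m β hα hα1 hm hβ Y hY hY0 hY1
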